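/- Let δ > 0, λ > 0, τ ∈ ℝ with 2λδ² < τ², and let N ≥ 1 be a real number. Then ∫_0^∞ λ·exp(λt)·(1/(N·δ·√(2πt)))·exp(−(ln N − τt)²/(2δ²t)) dt = (λ/√(τ² − 2λδ²))·N^{−1 + τ/δ² − √(τ² − 2λδ²)/δ²}. (This is the integral computed in Eqs. (13)–(16) of the proof of Theorem 2, with weight λe^{λt}; the condition 2λδ² < τ² ensures that a = λ − τ²/(2δ²) < 0, so the integral converges.) -/

import Mathlib

open Real MeasureTheory

open Set Filter

theorem inv_subst (c : ℝ) (hc : 0 < c) (g : ℝ → ℝ) :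
    ∫ u in Ioi (0:ℝ), g u = ∫ u in Ioi (0:ℝ), (c / u ^ 2) * g (c / u) := by
  have himg : (fun u : ℝ => c / u) '' Ioi 0 = Ioi 0 := by
    ext y; constructor
    · rintro ⟨u, hu, rfl⟩; exact div_pos hc hu
    · intro hy; exact ⟨c / y, div_pos hc hy, by field_simp⟩
  have hderiv : ∀ u ∈ Ioi (0:ℝ), HasDerivWithinAt (fun u => c / u) (-c / u ^ 2) (Ioi 0) u := by
    intro u hu
    have : HasDerivWithinAt (fun u => c / u) ((0 * id u - c * 1) / id u ^ 2) (Ioi 0) u :=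
      ((hasDerivAt_const u c).div (hasDerivAt_id u) (ne_of_gt hu)).hasDerivWithinAt
      (s := Ioi (0:ℝ))
    convert this using 1; simp only [id]; ring
  have hinj : InjOn (fun u : ℝ => c / u) (Ioi 0) := by
    intro u hu v hv h
    simp only [mem_Ioi] at hu hv
    field_simp at h
    exact h.symm
  have h := integral_image_eq_integral_abs_deriv_smul measurableSet_Ioi hderiv hinj g
  rw [himg] at h
  rw [h]
  refine setIntegral_congr_fun measurableSet_Ioi fun u hu => ?_
  have habs : |(-c / u ^ 2)| = c / u ^ 2 := by
    rw [abs_of_nonpos (div_nonpos_of_nonpos_of_nonneg (by linarith) (sq_nonneg u))]; ring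
  simp [habs, smul_eq_mul]

theorem sq_subst (g : ℝ → ℝ) :
    ∫ t in Ioi (0:ℝ), g t = ∫ s in Ioi (0:ℝ), (2 * s) * g (s ^ 2) := by
  have himg : (fun s : ℝ => s ^ 2) '' Ioi 0 = Ioi 0 := by
    ext y; constructor
    · rintro ⟨s, hs, rfl⟩; exact pow_pos (show (0:ℝ) < s from hs) 2
    · intro hy; exact ⟨Real.sqrt y, Real.sqrt_pos.2 hy, Real.sq_sqrt hy.le⟩
  have hderiv : ∀ s ∈ Ioi (0:ℝ), HasDerivWithinAt (fun s : ℝ => s ^ 2) (2 * s) (Ioi 0) s := by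
    intro s _
    simpa using ((hasDerivAt_pow 2 s).hasDerivWithinAt (s := Ioi (0:ℝ)))
  have hinj : InjOn (fun s : ℝ => s ^ 2) (Ioi 0) := by
    intro u hu v hv h
    simp only [mem_Ioi] at hu hv
    simp only at h; nlinarith [sq_nonneg (u - v), sq_nonneg (u + v)]
  have h := integral_image_eq_integral_abs_deriv_smul measurableSet_Ioi hderiv hinj g
  rw [himg] at h
  rw [h]
  refine setIntegral_congr_fun measurableSet_Ioi fun s hs => ?_
  have hs' : (0:ℝ) < s := hs
  rw [abs_of_nonneg (by linarith : (0:ℝ) ≤ 2 * s)]; rfl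

theorem glasser (a b : ℝ) (ha : 0 < a) (hb : 0 < b) :
    ∫ u in Ioi (0:ℝ), Real.exp (-(a * u - b / u) ^ 2) = Real.sqrt π / (2 * a) := by
  set φ : ℝ → ℝ := fun u => a * u - b / u with hφ
  set f : ℝ → ℝ := fun u => Real.exp (-(a * u - b / u) ^ 2) with hf
  have hderiv : ∀ u ∈ Ioi (0:ℝ), HasDerivWithinAt φ (a + b / u ^ 2) (Ioi 0) u := by
    intro u hu
    have h1 : HasDerivAt φ (a * 1 - (0 * u - b * 1) / u ^ 2) u :=
      ((hasDerivAt_id u).const_mul a).sub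
        (((hasDerivAt_const u b).div (hasDerivAt_id u) (ne_of_gt hu)))
    have : a * 1 - (0 * u - b * 1) / u ^ 2 = a + b / u ^ 2 := by ring
    exact (this ▸ h1).hasDerivWithinAt
  have hinj : InjOn φ (Ioi 0) := by
    intro u hu v hv h
    simp only [mem_Ioi] at hu hv
    simp only [hφ] at h
    have h' : (u - v) * (a * u * v + b) = 0 := by
      field_simp at h; nlinarith [h]
    have : a * u * v + b > 0 := by positivity
    have := mul_eq_zero.1 h'
    rcases this with h | h
    · linarith
    · linarith
  have hcont : ContinuousOn φ (Ioi 0) := by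
    intro u hu; exact (hderiv u hu).continuousWithinAt
  have himg : φ '' Ioi 0 = univ := by
    apply eq_univ_of_forall
    intro y
    -- find u1 with φ u1 < y and u2 with φ u2 > y, then IVT
    have h2 : Tendsto φ atTop atTop := by
      apply Filter.tendsto_atTop_mono' _ _ (tendsto_atTop_add_const_right atTop (-b) ((tendsto_id.const_mul_atTop ha)))
      filter_upwards [eventually_ge_atTop (1:ℝ)] with u hu
      have : b / u ≤ b := by
        rw [div_le_iff₀ (by linarith)]; nlinarith
      simp only [hφ, id]
      linarith
    have h1 : Tendsto φ (nhdsWithin 0 (Ioi 0)) atBot := by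
      have hb' : Tendsto (fun u : ℝ => b / u) (nhdsWithin 0 (Ioi 0)) atTop := by
        have := Tendsto.const_mul_atTop hb tendsto_inv_nhdsGT_zero
        exact this.congr fun u => by rw [div_eq_mul_inv]
      have ha' : Tendsto (fun u : ℝ => a * u) (nhdsWithin 0 (Ioi 0)) (nhds 0) := by
        have h0 : Tendsto (fun u : ℝ => a * u) (nhds 0) (nhds (a * 0)) :=
          ((continuous_const.mul continuous_id).tendsto (0:ℝ))
        rw [mul_zero] at h0
        exact h0.mono_left nhdsWithin_le_nhds
      have hneg : Tendsto (fun u : ℝ => -(b / u)) (nhdsWithin 0 (Ioi 0)) atBot :=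
        tendsto_neg_atBot_iff.2 hb'
      have := ha'.add_atBot hneg
      exact this.congr fun u => by simp [hφ]; ring
    -- pick u1 near 0 with φ u1 ≤ y
    have hne : (nhdsWithin (0:ℝ) (Ioi 0)).NeBot := nhdsGT_neBot 0
    have hev1 : ∀ᶠ u in nhdsWithin (0:ℝ) (Ioi 0), φ u ≤ y ∧ u ∈ Ioi 0 :=
      (h1.eventually (eventually_le_atBot y)).and self_mem_nhdsWithin
    obtain ⟨u1, hu1y, hu1⟩ := hev1.exists
    have hev2 : ∀ᶠ u in atTop, y ≤ φ u ∧ u1 ≤ u :=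
      (h2.eventually (eventually_ge_atTop y)).and (eventually_ge_atTop u1)
    obtain ⟨u2, hu2y, hu12⟩ := hev2.exists
    have hsub : Icc u1 u2 ⊆ Ioi 0 := fun x hx => lt_of_lt_of_le hu1 hx.1
    have := intermediate_value_Icc hu12 (hcont.mono hsub)
    obtain ⟨u, hu, huy⟩ := this ⟨hu1y, hu2y⟩
    exact ⟨u, hsub hu, huy⟩
  -- integrability of f
  have hfcont : ContinuousOn f (Ioi 0) :=
    Real.continuous_exp.comp_continuousOn ((hcont.pow 2).neg)
  have hfint : IntegrableOn f (Ioi 0) := by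
    have hgint : IntegrableOn (fun u : ℝ => Real.exp (2*a*b) * Real.exp (-(a^2) * u^2)) (Ioi 0) :=
      ((integrable_exp_neg_mul_sq (by positivity : (0:ℝ) < a^2)).const_mul _).integrableOn
    refine Integrable.mono' hgint (hfcont.aestronglyMeasurable measurableSet_Ioi) ?_
    rw [ae_restrict_iff' measurableSet_Ioi]
    filter_upwards with u hu
    have hu' : (0:ℝ) < u := hu
    have hb2 : (0:ℝ) ≤ (b/u)^2 := sq_nonneg _
    have hexp : -(a * u - b / u) ^ 2 ≤ 2*a*b + (-(a^2) * u^2) := by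
      have : (a*u - b/u)^2 = a^2*u^2 - 2*a*b + (b/u)^2 := by
        field_simp; ring
      nlinarith
    have : f u ≤ Real.exp (2*a*b) * Real.exp (-(a^2) * u^2) := by
      rw [← Real.exp_add]
      exact Real.exp_le_exp.2 hexp
    simpa [hf, Real.norm_eq_abs, abs_of_pos (Real.exp_pos _)] using this
  -- change of variables to the full Gaussian
  have key := integral_image_eq_integral_abs_deriv_smul measurableSet_Ioi hderiv hinj
      (fun t => Real.exp (-t^2))
  rw [himg] at key
  have hLHS : ∫ t in univ, Real.exp (-t^2) = Real.sqrt π := by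
    rw [MeasureTheory.setIntegral_univ]
    have := integral_gaussian 1
    simpa using this
  have hcongr : ∀ u ∈ Ioi (0:ℝ),
      |a + b / u ^ 2| • Real.exp (-(φ u)^2) = a * f u + (b / u^2) * f u := by
    intro u hu
    have hu' : (0:ℝ) < u := hu
    have habs : |a + b / u ^ 2| = a + b / u^2 := abs_of_pos (by positivity)
    simp only [smul_eq_mul, habs, hf, hφ]
    ring
  -- integrability of the transformed integrand
  have hsum : IntegrableOn (fun u => |a + b / u ^ 2| • Real.exp (-(φ u)^2)) (Ioi 0) := by
    have := (integrableOn_image_iff_integrableOn_abs_deriv_smul measurableSet_Ioi hderiv hinj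
      (fun t => Real.exp (-t^2))).1
    apply this
    rw [himg]
    exact (integrable_exp_neg_mul_sq (by norm_num : (0:ℝ) < 1)).integrableOn.congr_fun
      (fun x _ => by norm_num) MeasurableSet.univ
  have hsum' : IntegrableOn (fun u => a * f u + (b / u^2) * f u) (Ioi 0) :=
    hsum.congr_fun hcongr measurableSet_Ioi
  have hbf : IntegrableOn (fun u => (b / u^2) * f u) (Ioi 0) := by
    have h2 := hsum'.sub (hfint.const_mul a)
    exact IntegrableOn.congr_fun h2 (fun u _ => by simp only [Pi.sub_apply]; ring) measurableSet_Ioi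
  -- compute
  have hsplit : ∫ u in Ioi (0:ℝ), (a * f u + (b / u^2) * f u) =
      (a * ∫ u in Ioi (0:ℝ), f u) + ∫ u in Ioi (0:ℝ), (b / u^2) * f u := by
    rw [integral_add (hfint.const_mul a) hbf, integral_const_mul]
  have hswap : ∫ u in Ioi (0:ℝ), (b / u^2) * f u = a * ∫ u in Ioi (0:ℝ), f u := by
    have h := inv_subst (b/a) (div_pos hb ha) f
    have heq : ∀ u ∈ Ioi (0:ℝ), (b/a) / u ^ 2 * f ((b/a) / u) = (1/a) * ((b / u^2) * f u) := by
      intro u hu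
      have hu' : (0:ℝ) < u := hu
      have hfe : f ((b/a) / u) = f u := by
        simp only [hf]
        congr 1
        have : a * (b / a / u) - b / (b / a / u) = -(a * u - b / u) := by field_simp; ring
        rw [this]; ring
      rw [hfe]; field_simp
    rw [setIntegral_congr_fun measurableSet_Ioi heq, integral_const_mul] at h
    rw [h]
    field_simp
  have hfinal : Real.sqrt π = 2 * a * ∫ u in Ioi (0:ℝ), f u := by
    calc Real.sqrt π = ∫ t in univ, Real.exp (-t^2) := hLHS.symm
    _ = ∫ u in Ioi (0:ℝ), |a + b / u ^ 2| • Real.exp (-(φ u)^2) := by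
        rw [key]
    _ = ∫ u in Ioi (0:ℝ), (a * f u + (b / u^2) * f u) :=
        setIntegral_congr_fun measurableSet_Ioi hcongr
    _ = (a * ∫ u in Ioi (0:ℝ), f u) + ∫ u in Ioi (0:ℝ), (b / u^2) * f u := hsplit
    _ = 2 * a * ∫ u in Ioi (0:ℝ), f u := by rw [hswap]; ring
  have : (∫ u in Ioi (0:ℝ), f u) = Real.sqrt π / (2 * a) := by
    field_simp at hfinal ⊢
    linarith
  exact this

theorem bessel_int (A B : ℝ) (hA : 0 ≤ A) (hB : 0 < B) :
    ∫ t in Ioi (0:ℝ), Real.exp (-(A/t) - B*t) / Real.sqrt t =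
      Real.sqrt (π/B) * Real.exp (-2 * Real.sqrt (A*B)) := by
  rw [sq_subst (fun t => Real.exp (-(A/t) - B*t) / Real.sqrt t)]
  have hsimp : ∀ s ∈ Ioi (0:ℝ),
      (2*s) * (Real.exp (-(A/s^2) - B*s^2) / Real.sqrt (s^2)) =
        2 * Real.exp (-(A/s^2) - B*s^2) := by
    intro s hs
    have hs' : (0:ℝ) < s := hs
    rw [Real.sqrt_sq hs'.le]
    field_simp
  rw [setIntegral_congr_fun measurableSet_Ioi hsimp]
  rcases eq_or_lt_of_le hA with h0 | hA'
  · -- A = 0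
    subst h0
    have h1 : ∀ s ∈ Ioi (0:ℝ), 2 * Real.exp (-(0/s^2) - B*s^2) = 2 * Real.exp (-B * s^2) := by
      intro s _; norm_num
    rw [setIntegral_congr_fun measurableSet_Ioi h1, integral_const_mul,
      integral_gaussian_Ioi]
    simp
    ring
  · set a := Real.sqrt B with hadef
    set b := Real.sqrt A with hbdef
    have ha : 0 < a := Real.sqrt_pos.2 hB
    have hb : 0 < b := Real.sqrt_pos.2 hA'
    have ha2 : a^2 = B := Real.sq_sqrt hB.le
    have hb2 : b^2 = A := Real.sq_sqrt hA'.le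
    have hexp : ∀ s ∈ Ioi (0:ℝ),
        2 * Real.exp (-(A/s^2) - B*s^2) =
          (2 * Real.exp (-2 * Real.sqrt (A*B))) * Real.exp (-(a * s - b / s) ^ 2) := by
      intro s hs
      have hs' : (0:ℝ) < s := hs
      rw [mul_assoc, ← Real.exp_add]
      congr 1
      have hab : Real.sqrt (A*B) = b * a := by
        rw [Real.sqrt_mul hA'.le, hbdef, hadef]
      rw [hab]
      have : (a * s - b / s)^2 = a^2 * s^2 - 2*(b*a) + b^2/s^2 := by
        field_simp; ring
      rw [this, ha2, hb2]
      ring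
    rw [setIntegral_congr_fun measurableSet_Ioi hexp, integral_const_mul, glasser a b ha hb]
    have hπB : Real.sqrt (π/B) = Real.sqrt π / a := by
      rw [hadef, Real.sqrt_div pi_pos.le]
    rw [hπB]
    field_simp

/-- **Eqs. (13)–(16) of the paper.** With weight `λ·e^{λt}` and under the
convergence condition `2λδ² < τ²`, mixing the lognormal densities (log-mean `τ·t`,
log-variance `δ²·t`) gives, for `N ≥ 1`,
`∫_0^∞ λ·e^{λt} · (1/(N·δ·√(2πt))) · exp (-(ln N - τt)²/(2δ²t)) dt
  = (λ/√(τ² - 2λδ²)) · N^{-1 + τ/δ² - √(τ² - 2λδ²)/δ²}`. -/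
theorem stmt_9 (δ lam τ N : ℝ) (hδ : 0 < δ) (hlam : 0 < lam)
    (hconv : 2 * lam * δ ^ 2 < τ ^ 2) (hN : 1 ≤ N) :
    ∫ t in Set.Ioi (0 : ℝ),
        lam * Real.exp (lam * t)
          * (1 / (N * δ * Real.sqrt (2 * Real.pi * t)))
          * Real.exp (-(Real.log N - τ * t) ^ 2 / (2 * δ ^ 2 * t)) =
      (lam / Real.sqrt (τ ^ 2 - 2 * lam * δ ^ 2))
        * N ^ (-1 + τ / δ ^ 2 - Real.sqrt (τ ^ 2 - 2 * lam * δ ^ 2) / δ ^ 2) := by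
  have hN0 : (0:ℝ) < N := lt_of_lt_of_le one_pos hN
  set m := Real.log N with hm
  have hm0 : 0 ≤ m := Real.log_nonneg hN
  set k := Real.sqrt (τ ^ 2 - 2 * lam * δ ^ 2) with hk
  have hk2pos : (0:ℝ) < τ ^ 2 - 2 * lam * δ ^ 2 := by linarith
  have hk0 : 0 < k := Real.sqrt_pos.2 hk2pos
  have hksq : k ^ 2 = τ ^ 2 - 2 * lam * δ ^ 2 := Real.sq_sqrt hk2pos.le
  set A := m^2 / (2 * δ^2) with hA
  set B := (τ ^ 2 - 2 * lam * δ ^ 2) / (2 * δ^2) with hB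
  have hApos : 0 ≤ A := by positivity
  have hBpos : 0 < B := by positivity
  set C := lam / (N * δ * Real.sqrt (2*π)) * Real.exp (τ * m / δ^2) with hC
  have hsqrt2pi : (0:ℝ) < Real.sqrt (2*π) := Real.sqrt_pos.2 (by positivity)
  have hintegrand : ∀ t ∈ Ioi (0:ℝ),
      lam * Real.exp (lam * t) * (1 / (N * δ * Real.sqrt (2 * π * t)))
        * Real.exp (-(m - τ * t) ^ 2 / (2 * δ ^ 2 * t)) =
      C * (Real.exp (-(A/t) - B*t) / Real.sqrt t) := by
    intro t ht
    have ht' : (0:ℝ) < t := ht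
    have hst : Real.sqrt (2 * π * t) = Real.sqrt (2*π) * Real.sqrt t := by
      rw [← Real.sqrt_mul (by positivity)]
    have hstpos : (0:ℝ) < Real.sqrt t := Real.sqrt_pos.2 ht'
    rw [hst, hC]
    have hexp : Real.exp (lam * t) * Real.exp (-(m - τ * t) ^ 2 / (2 * δ ^ 2 * t)) =
        Real.exp (τ * m / δ^2) * Real.exp (-(A/t) - B*t) := by
      rw [← Real.exp_add, ← Real.exp_add]
      congr 1
      rw [hA, hB]
      field_simp
      ring
    calc lam * Real.exp (lam * t) * (1 / (N * δ * (Real.sqrt (2*π) * Real.sqrt t)))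
          * Real.exp (-(m - τ * t) ^ 2 / (2 * δ ^ 2 * t))
        = lam / (N * δ * Real.sqrt (2*π) * Real.sqrt t)
          * (Real.exp (lam * t) * Real.exp (-(m - τ * t) ^ 2 / (2 * δ ^ 2 * t))) := by ring
      _ = lam / (N * δ * Real.sqrt (2*π) * Real.sqrt t)
          * (Real.exp (τ * m / δ^2) * Real.exp (-(A/t) - B*t)) := by rw [hexp]
      _ = lam / (N * δ * Real.sqrt (2*π)) * Real.exp (τ * m / δ^2)
          * (Real.exp (-(A/t) - B*t) / Real.sqrt t) := by ring
  rw [setIntegral_congr_fun measurableSet_Ioi hintegrand, integral_const_mul,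
    bessel_int A B hApos hBpos]
  -- compute the square roots
  have hAB : Real.sqrt (A * B) = m * k / (2 * δ^2) := by
    have : A * B = (m * k / (2 * δ^2))^2 := by
      rw [hA, hB, ← hksq]; field_simp
    rw [this, Real.sqrt_sq (by positivity)]
  have hπB : Real.sqrt (π / B) = Real.sqrt (2*π) * δ / k := by
    have : π / B = (Real.sqrt (2*π) * δ / k)^2 := by
      rw [hB, ← hksq]
      rw [div_pow, mul_pow, Real.sq_sqrt (by positivity : (0:ℝ) ≤ 2*π)]
      field_simp
    rw [this, Real.sqrt_sq (by positivity)]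
  rw [hAB, hπB]
  -- now pure algebra with exponentials
  rw [Real.rpow_def_of_pos hN0, ← hm]
  have hNm : N = Real.exp m := (Real.exp_log hN0).symm
  rw [hC, hNm]
  rw [show m * (-1 + τ / δ ^ 2 - k / δ ^ 2) = -m + (τ * m / δ^2 + -2 * (m * k / (2 * δ^2))) by
    field_simp; ring]
  rw [Real.exp_add, Real.exp_add, Real.exp_neg]
  field_simp
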